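/- Let H be a finite group and n ≥ 1 an integer. Then n · k(H ≀ C_n) ≥ k(H)^n, i.e. the wreath product H ≀ C_n has at least k(H)^n / n conjugacy classes. -/

import Mathlib

/-- The shift automorphism of `ZMod n → H` by `c : ZMod n`: `(c • f) x = f (x - c)`. -/
def shiftAut (H : Type*) [Group H] (n : ℕ) (c : ZMod n) : MulAut (ZMod n → H) where
  toFun f := fun x => f (x - c)
  invFun f := fun x => f (x + c)
  left_inv f := funext fun x => by simp
  right_inv f := funext fun x => by simp
  map_mul' f g := rfl

/-- The action of the cyclic group `C_n = Multiplicative (ZMod n)` on `ZMod n → H`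
by shifting: `(c • f) x = f (x - c)`. -/
def wreathAction (H : Type*) [Group H] (n : ℕ) :
    Multiplicative (ZMod n) →* MulAut (ZMod n → H) where
  toFun c := shiftAut H n c.toAdd
  map_one' := by
    ext f x
    show f (x - (1 : Multiplicative (ZMod n)).toAdd) = f x
    rw [toAdd_one, sub_zero]
  map_mul' c d := by
    ext f x
    show f (x - (c.toAdd + d.toAdd)) = f (x - c.toAdd - d.toAdd)
    rw [sub_sub]

/-- The wreath product `H ≀ C_n`: the semidirect product `(ZMod n → H) ⋊ C_n`,
where `c ∈ C_n = ZMod n` acts on `f : ZMod n → H` by `(c • f) x = f (x - c)`. -/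
abbrev WreathCyclic (H : Type*) [Group H] (n : ℕ) : Type _ :=
  SemidirectProduct (ZMod n → H) (Multiplicative (ZMod n)) (wreathAction H n)

/-!
Choosing representatives componentwise shows that `H^n` has at least `k(H)^n` conjugacy classes.
If two elements of the base group `H^n` are conjugate in `H ≀ C_n`, then one is conjugate in `H^n`
to a cyclic shift of the other; so at most `n` classes of `H^n` fuse into each class of `H ≀ C_n`.
-/

theorem card_pi_conjClasses_le_card_conjClasses_pi {ι : Type*} {H : ι → Type*}
    [∀ i, Group (H i)] [Finite ι] [∀ i, Finite (H i)] :
    Nat.card (∀ i, ConjClasses (H i)) ≤ Nat.card (ConjClasses (∀ i, H i)) := by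
  refine Nat.card_le_card_of_surjective
    (fun c i => ConjClasses.map (Pi.evalMonoidHom H i) c) fun c => ?_
  choose m hm using fun i => ConjClasses.mk_surjective (c i)
  exact ⟨ConjClasses.mk m, funext hm⟩

namespace SemidirectProduct

variable {N G : Type*} [Group N] [Group G] {φ : G →* MulAut N}

theorem isConj_inl_iff {m n : N} :
    IsConj (inl m : N ⋊[φ] G) (inl n) ↔ ∃ g : G, IsConj (φ g m) n := by
  constructor
  · rintro ⟨u, hu⟩
    refine ⟨(u : N ⋊[φ] G).right, isConj_iff.mpr ⟨(u : N ⋊[φ] G).left, ?_⟩⟩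
    have := congrArg left hu.eq
    simp only [mul_left, left_inl, right_inl, map_one, MulAut.one_apply] at this
    exact mul_inv_eq_iff_eq_mul.mpr this
  · rintro ⟨g, hg⟩
    have : IsConj (inl m : N ⋊[φ] G) (inl (φ g m)) :=
      isConj_iff.mpr ⟨inr g, by rw [inl_aut, map_inv]⟩
    exact this.trans (inl.map_isConj hg)

theorem conjClasses_map_inl_eq_iff {a b : ConjClasses N} :
    ConjClasses.map (inl : N →* N ⋊[φ] G) a = ConjClasses.map inl b ↔
      ∃ g : G, ConjClasses.map (φ g).toMonoidHom a = b := by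
  induction a using ConjClasses.forall_isConj.mpr
  induction b using ConjClasses.forall_isConj.mpr
  show ConjClasses.mk (inl _) = ConjClasses.mk (inl _) ↔ ∃ g, ConjClasses.mk (φ g _) = _
  simp only [ConjClasses.mk_eq_mk_iff_isConj, isConj_inl_iff]

theorem card_conjClasses_le_mul_card_conjClasses [Finite N] [Finite G] :
    Nat.card (ConjClasses N) ≤ Nat.card G * Nat.card (ConjClasses (N ⋊[φ] G)) := by
  have : Finite (N ⋊[φ] G) := Finite.of_equiv _ equivProd.symm
  let Φ := ConjClasses.map (inl : N →* N ⋊[φ] G)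
  rw [← Nat.card_prod]
  -- `invFun Φ` picks one class in each fibre of `Φ`; its `G`-translates exhaust that fibre.
  refine Nat.card_le_card_of_surjective
    (fun p : G × _ => ConjClasses.map (φ p.1).toMonoidHom (Function.invFun Φ p.2)) fun a => ?_
  obtain ⟨g, hg⟩ := conjClasses_map_inl_eq_iff.mp (Function.invFun_eq ⟨a, rfl⟩ : Φ _ = Φ a)
  exact ⟨(g, Φ a), hg⟩

end SemidirectProduct

theorem card_conjClasses_wreathCyclic (H : Type*) [Group H] [Fintype H] (n : ℕ) (hn : 1 ≤ n) :
    Nat.card (ConjClasses H) ^ n ≤ n * Nat.card (ConjClasses (WreathCyclic H n)) := by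
  have : NeZero n := ⟨by omega⟩
  calc Nat.card (ConjClasses H) ^ n = Nat.card (ZMod n → ConjClasses H) := by
        rw [Nat.card_fun, Nat.card_zmod]
    _ ≤ Nat.card (ConjClasses (ZMod n → H)) := card_pi_conjClasses_le_card_conjClasses_pi
    _ ≤ Nat.card (Multiplicative (ZMod n)) * Nat.card (ConjClasses (WreathCyclic H n)) :=
        SemidirectProduct.card_conjClasses_le_mul_card_conjClasses
    _ = n * Nat.card (ConjClasses (WreathCyclic H n)) := by
        rw [Nat.card_congr Multiplicative.toAdd, Nat.card_zmod]
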